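/- arXiv:2602.03948 — 2 statements merged into one kernel-verified Lean document; each statement's English description precedes it below -/
import Mathlib

section
/- Let n ≥ 2r with r ≥ 2 an integer and M > 0. For every γ ∈ ℝ^n with ‖γ‖_∞ ≤ M and every degree sequence d ∈ ℝ^n, the Hessian of ℓ_n at γ, namely ∇²ℓ_n(γ) = (1/(n choose r)) Σ_{e ∈ ([n] choose r)} σ'(Σ_{j∈e}γ_j) 1_e 1_e^T, satisfies e^{−2rM}/(4n) ≤ λ_min(∇²ℓ_n(γ)) ≤ λ_max(∇²ℓ_n(γ)) ≤ r²/n. In particular, ℓ_n is strongly convex on B_{∞,M} with modulus μ = e^{−2rM}/(4n) and smooth with smoothness constant at most r²/n. -/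
open MeasureTheory Finset
open scoped BigOperators ENNReal NNReal Classical

noncomputable section

/-- The type of potential hyperedges: `r`-element subsets of `[n]`. -/
abbrev Edge (n r : ℕ) := {e : Finset (Fin n) // e.card = r}

/-- An `r`-uniform hypergraph on `n` vertices, given by its hyperedge indicator. -/
abbrev HG (n r : ℕ) := Edge n r → Bool

/-- The logistic sigmoid `σ(t) = e^t / (1 + e^t)`. -/
def sigmoid (t : ℝ) : ℝ := Real.exp t / (1 + Real.exp t)

/-- The derivative of the sigmoid, `σ'(t) = e^t / (1 + e^t)^2`. -/
def sigmoid' (t : ℝ) : ℝ := Real.exp t / (1 + Real.exp t) ^ 2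

/-- The `r`-degree of vertex `i` in `G`: the number of hyperedges of `G` containing `i`. -/
def deg {n r : ℕ} (G : HG n r) (i : Fin n) : ℕ :=
  (Finset.univ.filter fun e : Edge n r => G e = true ∧ i ∈ e.1).card

/-- The probability of the hypergraph `G` under the `r`-uniform hypergraph β-model
with parameter `β`. -/
def hgWeight {n r : ℕ} (β : Fin n → ℝ) (G : HG n r) : ℝ :=
  ∏ e : Edge n r,
    if G e then sigmoid (∑ j ∈ e.1, β j) else 1 - sigmoid (∑ j ∈ e.1, β j)

/-- Membership in the sup-norm ball `B_{∞,M}`. -/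
def inBall {n : ℕ} (M : ℝ) (β : Fin n → ℝ) : Prop := ∀ i, |β i| ≤ M

/-- Two hypergraphs are adjacent if they differ in exactly one hyperedge. -/
def Adjacent {n r : ℕ} (G G' : HG n r) : Prop :=
  ∃ e : Edge n r, G e ≠ G' e ∧ ∀ f : Edge n r, f ≠ e → G f = G' f

/-- Probability mass function of the discrete Laplace distribution with parameter `α`. -/
def dLap (α : ℝ) (z : ℤ) : ℝ := ((1 - α) / (1 + α)) * α ^ z.natAbs

/-- Joint pmf of `n` i.i.d. discrete Laplace variables. -/
def dLapVec {n : ℕ} (α : ℝ) (z : Fin n → ℤ) : ℝ := ∏ i, dLap α (z i)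

/-- Real-valued indicator of a proposition. -/
def ind (p : Prop) : ℝ := if p then 1 else 0

/-- Quadratic form of the Hessian of `ℓ_n` at `γ`:
`x ↦ xᵀ ∇²ℓ_n(γ) x = (1/(n choose r)) Σ_e σ'(Σ_{j∈e} γ_j) (Σ_{j∈e} x_j)²`. -/
def hessEllnQF (n r : ℕ) (γ x : Fin n → ℝ) : ℝ :=
  (1 / (n.choose r : ℝ)) *
    ∑ e : Edge n r, sigmoid' (∑ j ∈ e.1, γ j) * (∑ j ∈ e.1, x j) ^ 2

/-! ### Auxiliary lemmas -/

lemma sigmoid'_le_quarter (t : ℝ) : sigmoid' t ≤ 1/4 := by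
  unfold sigmoid'
  rw [div_le_iff₀ (by positivity)]
  nlinarith [Real.exp_pos t, sq_nonneg (1 - Real.exp t)]

lemma sigmoid'_ge {t a : ℝ} (ha : 0 ≤ a) (h : |t| ≤ a) :
    Real.exp (-(2*a)) / 4 ≤ sigmoid' t := by
  unfold sigmoid'
  have h1 : Real.exp t ≤ Real.exp a := Real.exp_le_exp.2 (le_trans (le_abs_self t) h)
  have hea : 1 ≤ Real.exp a := Real.one_le_exp ha
  have het : 0 < Real.exp t := Real.exp_pos t
  have e1 : Real.exp t * Real.exp (-t) = 1 := by rw [← Real.exp_add]; simp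
  have h2 : Real.exp (-t) ≤ Real.exp a := Real.exp_le_exp.2 (le_trans (neg_le_abs t) h)
  have h2a : Real.exp a * Real.exp a = Real.exp (2*a) := by rw [← Real.exp_add]; ring_nf
  have hprod : Real.exp (-(2*a)) * Real.exp (2*a) = 1 := by rw [← Real.exp_add]; simp
  have key : (1 + Real.exp t)^2 ≤ 4 * Real.exp (2*a) * Real.exp t := by
    nlinarith [Real.exp_pos (-t), Real.exp_pos a,
      mul_le_mul h1 h2 (le_of_lt (Real.exp_pos _)) (le_of_lt (Real.exp_pos a))]
  rw [div_le_div_iff₀ (by norm_num) (by positivity)]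
  calc Real.exp (-(2*a)) * (1 + Real.exp t)^2
      ≤ Real.exp (-(2*a)) * (4 * Real.exp (2*a) * Real.exp t) :=
        mul_le_mul_of_nonneg_left key (le_of_lt (Real.exp_pos _))
    _ = Real.exp t * 4 := by linear_combination 4 * Real.exp t * hprod

lemma card_containing {n : ℕ} (r : ℕ) (s : Finset (Fin n)) (hs : s.card ≤ r) :
    ((univ.powersetCard r).filter fun e => s ⊆ e).card
      = (n - s.card).choose (r - s.card) := by
  have h : ((univ.powersetCard r).filter fun e => s ⊆ e).card
      = ((univ \ s).powersetCard (r - s.card)).card := by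
    apply Finset.card_bij' (fun e _ => e \ s) (fun u _ => u ∪ s)
    · intro e he
      simp only [mem_filter, mem_powersetCard] at he
      obtain ⟨⟨-, hcard⟩, hse⟩ := he
      simp only [mem_powersetCard]
      exact ⟨sdiff_subset_sdiff (subset_univ e) Subset.rfl,
        by rw [card_sdiff_of_subset hse, hcard]⟩
    · intro u hu
      simp only [mem_powersetCard] at hu
      obtain ⟨hu1, hu2⟩ := hu
      have hdisj : Disjoint u s :=
        Finset.disjoint_left.2 fun a ha has => (mem_sdiff.1 (hu1 ha)).2 has
      simp only [mem_filter, mem_powersetCard]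
      refine ⟨⟨subset_univ _, ?_⟩, subset_union_right⟩
      rw [card_union_of_disjoint hdisj, hu2, Nat.sub_add_cancel hs]
    · intro e he
      simp only [mem_filter] at he
      exact sdiff_union_of_subset he.2
    · intro u hu
      simp only [mem_powersetCard] at hu
      have hdisj : Disjoint u s :=
        Finset.disjoint_left.2 fun a ha has => (mem_sdiff.1 (hu.1 ha)).2 has
      exact union_sdiff_cancel_right hdisj
  rw [h, card_powersetCard, card_sdiff_of_subset (subset_univ s), card_univ, Fintype.card_fin]

lemma card_cont_one {n r : ℕ} (hr : 1 ≤ r) (j : Fin n) :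
    ((univ.powersetCard r).filter fun e => j ∈ e).card = (n - 1).choose (r - 1) := by
  have : ((univ.powersetCard r).filter fun e => j ∈ e)
      = ((univ.powersetCard r).filter fun e => ({j} : Finset (Fin n)) ⊆ e) := by
    simp [singleton_subset_iff]
  rw [this, card_containing r {j} (by simpa using hr), card_singleton]

lemma card_cont_two {n r : ℕ} (hr : 2 ≤ r) {i j : Fin n} (hij : i ≠ j) :
    ((univ.powersetCard r).filter fun e => i ∈ e ∧ j ∈ e).card
      = (n - 2).choose (r - 2) := by
  have : ((univ.powersetCard r).filter fun e => i ∈ e ∧ j ∈ e)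
      = ((univ.powersetCard r).filter fun e => ({i, j} : Finset (Fin n)) ⊆ e) := by
    apply Finset.filter_congr
    intro e _
    simp [insert_subset_iff, singleton_subset_iff]
  rw [this, card_containing r {i,j}
      (by rw [card_insert_of_notMem (by simpa using hij), card_singleton]; omega),
    card_insert_of_notMem (by simpa using hij), card_singleton]

lemma sum_edge_linear {n r : ℕ} (hr : 1 ≤ r) (g : Fin n → ℝ) :
    ∑ e ∈ univ.powersetCard r, ∑ j ∈ e, g j
      = ((n - 1).choose (r - 1) : ℝ) * ∑ j, g j := by
  have step : ∀ e ∈ univ.powersetCard r, ∑ j ∈ e, g j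
      = ∑ j : Fin n, if j ∈ e then g j else 0 := by
    intro e _
    rw [Finset.sum_ite_mem, univ_inter]
  rw [Finset.sum_congr rfl step, Finset.sum_comm, Finset.mul_sum]
  refine Finset.sum_congr rfl fun j _ => ?_
  rw [← Finset.sum_filter, Finset.sum_const, card_cont_one hr j, nsmul_eq_mul]

lemma sum_edge_sq {n r : ℕ} (hr : 2 ≤ r) (x : Fin n → ℝ) :
    ∑ e ∈ univ.powersetCard r, (∑ j ∈ e, x j) ^ 2
      = (((n - 1).choose (r - 1) : ℝ) - ((n - 2).choose (r - 2) : ℝ)) * ∑ i, (x i) ^ 2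
        + ((n - 2).choose (r - 2) : ℝ) * (∑ i, x i) ^ 2 := by
  have step : ∀ e ∈ univ.powersetCard r, (∑ j ∈ e, x j) ^ 2
      = ∑ i : Fin n, ∑ j : Fin n,
          (if i ∈ e ∧ j ∈ e then x i * x j else 0) := by
    intro e _
    have h1 : ∑ j ∈ e, x j = ∑ j : Fin n, if j ∈ e then x j else 0 := by
      rw [Finset.sum_ite_mem, univ_inter]
    rw [sq, h1, Finset.sum_mul_sum]
    refine Finset.sum_congr rfl fun i _ => Finset.sum_congr rfl fun j _ => ?_
    split_ifs with h1 h2 h3 h4 <;> simp_all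
  rw [Finset.sum_congr rfl step, Finset.sum_comm]
  have step2 : ∀ i : Fin n, ∑ e ∈ univ.powersetCard r, ∑ j : Fin n,
        (if i ∈ e ∧ j ∈ e then x i * x j else 0)
      = ∑ j : Fin n, (x i * x j) *
          (((univ.powersetCard r).filter fun e => i ∈ e ∧ j ∈ e).card : ℝ) := by
    intro i
    rw [Finset.sum_comm]
    refine Finset.sum_congr rfl fun j _ => ?_
    rw [← Finset.sum_filter, Finset.sum_const, nsmul_eq_mul, mul_comm]
  rw [Finset.sum_congr rfl fun i _ => step2 i]
  have step3 : ∀ i j : Fin n,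
      (((univ.powersetCard r).filter fun e => i ∈ e ∧ j ∈ e).card : ℝ)
      = (if i = j then ((n-1).choose (r-1) : ℝ) else ((n-2).choose (r-2) : ℝ)) := by
    intro i j
    split_ifs with h
    · subst h
      have hf : ((univ.powersetCard r).filter fun e => i ∈ e ∧ i ∈ e)
          = ((univ.powersetCard r).filter fun e => i ∈ e) := by
        apply Finset.filter_congr; intro e _; simp
      rw [hf, card_cont_one (by omega : 1 ≤ r) i]
    · rw [card_cont_two hr h]
  simp_rw [step3]
  have expand : ∀ i j : Fin n,
      x i * x j * (if i = j then ((n-1).choose (r-1) : ℝ) else ((n-2).choose (r-2) : ℝ))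
      = x i * x j * ((n-2).choose (r-2) : ℝ)
        + (if i = j then x i * x j * (((n-1).choose (r-1) : ℝ) - ((n-2).choose (r-2) : ℝ))
           else 0) := by
    intro i j
    split_ifs <;> ring
  simp_rw [expand, Finset.sum_add_distrib]
  simp_rw [Finset.sum_ite_eq]
  simp only [mem_univ, if_true]
  have : ∑ i : Fin n, ∑ j : Fin n, x i * x j * ((n-2).choose (r-2) : ℝ)
      = ((n-2).choose (r-2) : ℝ) * (∑ i, x i)^2 := by
    rw [sq, Finset.sum_mul_sum, Finset.mul_sum]
    refine Finset.sum_congr rfl fun i _ => ?_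
    rw [Finset.mul_sum]
    exact Finset.sum_congr rfl fun j _ => by ring
  rw [this, Finset.mul_sum]
  ring_nf
  congr 1
  exact Finset.sum_congr rfl fun i _ => by ring

set_option maxHeartbeats 1600000 in
/-- Two-sided eigenvalue bounds (stated via the quadratic form) for the
Hessian of `ℓ_n` on `B_{∞,M}`: `e^{-2rM}/(4n) ≤ λ_min ≤ λ_max ≤ r²/n`; in particular
`ℓ_n` is strongly convex with modulus `e^{-2rM}/(4n)` and `r²/n`-smooth on `B_{∞,M}`. -/
theorem stmt11 (n r : ℕ) (hr : 2 ≤ r) (hn : 2 * r ≤ n) (M : ℝ) (hM : 0 < M)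
    (γ : Fin n → ℝ) (hγ : inBall M γ) (x : Fin n → ℝ) :
    Real.exp (-(2 * (r : ℝ)) * M) / (4 * n) * ∑ i, (x i) ^ 2 ≤ hessEllnQF n r γ x ∧
    hessEllnQF n r γ x ≤ (r : ℝ) ^ 2 / n * ∑ i, (x i) ^ 2 := by
  obtain ⟨a, rfl⟩ : ∃ a, r = a + 2 := ⟨r - 2, by omega⟩
  obtain ⟨c, rfl⟩ : ∃ c, n = c + 2 := ⟨n - 2, by omega⟩
  have hca : 2 * a + 2 ≤ c := by omega
  -- notation
  set Cn : ℝ := ((c+2).choose (a+2) : ℝ) with hCn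
  set C1 : ℝ := ((c+1).choose (a+1) : ℝ) with hC1
  set C2 : ℝ := (c.choose a : ℝ) with hC2
  have hCpos : (0:ℝ) < Cn := by
    rw [hCn]
    exact_mod_cast Nat.choose_pos (show a+2 ≤ c+2 by omega)
  have hC1nn : (0:ℝ) ≤ C1 := by positivity
  have hC2nn : (0:ℝ) ≤ C2 := by positivity
  -- choose identities
  have id1 : ((c:ℝ)+2) * C1 = Cn * ((a:ℝ)+2) := by
    rw [hC1, hCn]
    exact_mod_cast Nat.add_one_mul_choose_eq (c+1) (a+1)
  have id2 : ((c:ℝ)+1) * C2 = C1 * ((a:ℝ)+1) := by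
    rw [hC1, hC2]
    exact_mod_cast Nat.add_one_mul_choose_eq c a
  -- key combinatorial inequality : Cn ≤ (c+2) * (C1 - C2)
  have e1 : ((c:ℝ)+1) * (((c:ℝ)+2) * (C1 - C2)) = ((a:ℝ)+2) * ((c:ℝ) - a) * Cn := by
    linear_combination ((c:ℝ) - (a:ℝ)) * id1 - ((c:ℝ)+2) * id2
  have hfac : ((c:ℝ)+1) ≤ ((a:ℝ)+2) * ((c:ℝ) - a) := by
    have hca' : (2*(a:ℝ) + 2) ≤ c := by exact_mod_cast hca
    nlinarith [sq_nonneg ((a:ℝ)+1), (Nat.cast_nonneg a : (0:ℝ) ≤ a)]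
  have key : Cn ≤ ((c:ℝ)+2) * (C1 - C2) := by
    have h3 : ((c:ℝ)+1) * Cn ≤ ((c:ℝ)+1) * (((c:ℝ)+2) * (C1 - C2)) := by
      rw [e1]
      exact mul_le_mul_of_nonneg_right hfac (le_of_lt hCpos)
    exact le_of_mul_le_mul_left h3 (by positivity)
  -- rewrite the quadratic form as a sum over powersetCard
  have hEQ : hessEllnQF (c+2) (a+2) γ x
      = (1 / Cn) * ∑ e ∈ univ.powersetCard (a+2),
          sigmoid' (∑ j ∈ e, γ j) * (∑ j ∈ e, x j) ^ 2 := by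
    unfold hessEllnQF
    rw [Finset.sum_subtype (p := fun e : Finset (Fin (c+2)) => e.card = a+2)
      (univ.powersetCard (a+2))
      (fun e => by simp [Finset.mem_powersetCard])
      (fun e => sigmoid' (∑ j ∈ e, γ j) * (∑ j ∈ e, x j) ^ 2)]
  set Q : ℝ := ∑ i, (x i) ^ 2 with hQ
  have hQnn : 0 ≤ Q := by positivity
  set L : ℝ := Real.exp (-(2 * ((a:ℝ)+2)) * M) with hL
  have hLpos : 0 < L := Real.exp_pos _
  -- bound on each exponent argument
  have habs : ∀ e ∈ univ.powersetCard (a+2), |∑ j ∈ e, γ j| ≤ ((a:ℝ)+2) * M := by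
    intro e he
    have hcard : e.card = a + 2 := (Finset.mem_powersetCard.1 he).2
    calc |∑ j ∈ e, γ j| ≤ ∑ j ∈ e, |γ j| := Finset.abs_sum_le_sum_abs _ _
      _ ≤ ∑ j ∈ e, M := Finset.sum_le_sum fun j _ => hγ j
      _ = ((a:ℝ)+2) * M := by
          rw [Finset.sum_const, nsmul_eq_mul, hcard]; push_cast; ring
  constructor
  · -- lower bound
    have hterm : ∀ e ∈ univ.powersetCard (a+2),
        L / 4 * (∑ j ∈ e, x j) ^ 2
          ≤ sigmoid' (∑ j ∈ e, γ j) * (∑ j ∈ e, x j) ^ 2 := by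
      intro e he
      refine mul_le_mul_of_nonneg_right ?_ (sq_nonneg _)
      have := sigmoid'_ge (t := ∑ j ∈ e, γ j) (a := ((a:ℝ)+2) * M)
        (by positivity) (habs e he)
      rw [hL]
      calc Real.exp (-(2 * ((a:ℝ)+2)) * M) / 4
          = Real.exp (-(2 * (((a:ℝ)+2) * M))) / 4 := by ring_nf
        _ ≤ _ := this
    have hsum : L / 4 * ((C1 - C2) * Q + C2 * (∑ i, x i) ^ 2)
        ≤ ∑ e ∈ univ.powersetCard (a+2),
            sigmoid' (∑ j ∈ e, γ j) * (∑ j ∈ e, x j) ^ 2 := by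
      calc L / 4 * ((C1 - C2) * Q + C2 * (∑ i, x i) ^ 2)
          = L / 4 * ∑ e ∈ univ.powersetCard (a+2), (∑ j ∈ e, x j) ^ 2 := by
            rw [sum_edge_sq (by omega : 2 ≤ a+2) x,
              (by omega : c + 2 - 1 = c + 1), (by omega : c + 2 - 2 = c),
              (by omega : a + 2 - 1 = a + 1), (by omega : a + 2 - 2 = a),
              ← hC1, ← hC2, ← hQ]
        _ = ∑ e ∈ univ.powersetCard (a+2), L / 4 * (∑ j ∈ e, x j) ^ 2 := by
            rw [Finset.mul_sum]
        _ ≤ _ := Finset.sum_le_sum hterm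
    rw [hEQ]
    have hdrop : L / 4 * ((C1 - C2) * Q) ≤ L / 4 * ((C1 - C2) * Q + C2 * (∑ i, x i) ^ 2) := by
      have : 0 ≤ C2 * (∑ i, x i) ^ 2 := by positivity
      nlinarith [hLpos]
    have hmain : L / (4 * ((c:ℝ)+2)) * Q ≤ (1 / Cn) * (L / 4 * ((C1 - C2) * Q)) := by
      rw [← sub_nonneg]
      have expand : (1 / Cn) * (L / 4 * ((C1 - C2) * Q)) - L / (4 * ((c:ℝ)+2)) * Q
          = (L * Q * (((c:ℝ)+2) * (C1 - C2) - Cn)) / (4 * Cn * ((c:ℝ)+2)) := by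
        field_simp
      rw [expand]
      apply div_nonneg _ (by positivity)
      exact mul_nonneg (mul_nonneg hLpos.le hQnn) (sub_nonneg.2 key)
    have hfinal := le_trans hmain
      (mul_le_mul_of_nonneg_left (le_trans hdrop hsum) (by positivity : (0:ℝ) ≤ 1/Cn))
    calc Real.exp (-(2 * ((a+2:ℕ) : ℝ)) * M) / (4 * ((c+2:ℕ):ℝ)) * Q
        = L / (4 * ((c:ℝ)+2)) * Q := by rw [hL]; push_cast; ring_nf
      _ ≤ _ := hfinal
  · -- upper bound
    have hterm : ∀ e ∈ univ.powersetCard (a+2),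
        sigmoid' (∑ j ∈ e, γ j) * (∑ j ∈ e, x j) ^ 2
          ≤ 1/4 * (((a:ℝ)+2) * ∑ j ∈ e, (x j) ^ 2) := by
      intro e he
      have hcard : e.card = a + 2 := (Finset.mem_powersetCard.1 he).2
      have hcs : (∑ j ∈ e, x j) ^ 2 ≤ ((a:ℝ)+2) * ∑ j ∈ e, (x j) ^ 2 := by
        have := sq_sum_le_card_mul_sum_sq (s := e) (f := x)
        rw [hcard] at this
        push_cast at this
        convert this using 2
      have hsq : 0 ≤ (∑ j ∈ e, x j) ^ 2 := sq_nonneg _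
      have hs' : 0 ≤ sigmoid' (∑ j ∈ e, γ j) := by
        unfold sigmoid'; positivity
      calc sigmoid' (∑ j ∈ e, γ j) * (∑ j ∈ e, x j) ^ 2
          ≤ 1/4 * (∑ j ∈ e, x j) ^ 2 :=
            mul_le_mul_of_nonneg_right (sigmoid'_le_quarter _) hsq
        _ ≤ 1/4 * (((a:ℝ)+2) * ∑ j ∈ e, (x j) ^ 2) := by
            nlinarith [hcs]
    have hsum : ∑ e ∈ univ.powersetCard (a+2),
          sigmoid' (∑ j ∈ e, γ j) * (∑ j ∈ e, x j) ^ 2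
        ≤ 1/4 * (((a:ℝ)+2) * (C1 * Q)) := by
      calc ∑ e ∈ univ.powersetCard (a+2),
            sigmoid' (∑ j ∈ e, γ j) * (∑ j ∈ e, x j) ^ 2
          ≤ ∑ e ∈ univ.powersetCard (a+2),
              1/4 * (((a:ℝ)+2) * ∑ j ∈ e, (x j) ^ 2) := Finset.sum_le_sum hterm
        _ = 1/4 * (((a:ℝ)+2) * ∑ e ∈ univ.powersetCard (a+2), ∑ j ∈ e, (x j) ^ 2) := by
            rw [Finset.mul_sum, Finset.mul_sum]
        _ = 1/4 * (((a:ℝ)+2) * (C1 * Q)) := by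
            rw [sum_edge_linear (by omega : 1 ≤ a+2) (fun j => (x j)^2),
              (by omega : c + 2 - 1 = c + 1), (by omega : a + 2 - 1 = a + 1),
              ← hC1, ← hQ]
    rw [hEQ]
    have hscal : (1/Cn) * (1/4 * (((a:ℝ)+2) * (C1 * Q))) ≤ ((a:ℝ)+2)^2 / ((c:ℝ)+2) * Q := by
      have h1R : ((a:ℝ)+2) * (((c:ℝ)+2) * C1) = ((a:ℝ)+2) * (((a:ℝ)+2) * Cn) := by
        rw [id1]; ring
      rw [← sub_nonneg]
      have expand : ((a:ℝ)+2)^2 / ((c:ℝ)+2) * Q - (1/Cn) * (1/4 * (((a:ℝ)+2) * (C1 * Q)))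
          = (4 * ((a:ℝ)+2)^2 * Cn * Q - ((a:ℝ)+2) * (((c:ℝ)+2) * C1) * Q)
            / (4 * Cn * ((c:ℝ)+2)) := by
        field_simp
      rw [expand]
      apply div_nonneg _ (by positivity)
      have : ((a:ℝ)+2) * (((c:ℝ)+2) * C1) * Q = ((a:ℝ)+2)^2 * Cn * Q := by
        rw [id1]; ring
      rw [this]
      nlinarith [mul_nonneg (mul_nonneg (by positivity : (0:ℝ) ≤ ((a:ℝ)+2)^2) (le_of_lt hCpos)) hQnn]
    have := le_trans
      (mul_le_mul_of_nonneg_left hsum (by positivity : (0:ℝ) ≤ 1/Cn)) hscal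
    calc (1/Cn) * ∑ e ∈ univ.powersetCard (a+2),
          sigmoid' (∑ j ∈ e, γ j) * (∑ j ∈ e, x j) ^ 2
        ≤ ((a:ℝ)+2)^2 / ((c:ℝ)+2) * Q := this
      _ = (((a+2:ℕ):ℝ))^2 / ((c+2:ℕ):ℝ) * Q := by push_cast; ring
end
end

section
/- Fix integers n ≥ r ≥ 2, M > 0, an index i ∈ [n], and ρ ∈ (0, M]. For v ∈ {−1,+1}^n, let P_v denote the law of the r-uniform hypergraph β-model with parameter β_v = ρ v, and define the mixtures P_{+i} = (2/2^n) Σ_{v : v_i = +1} P_v and P_{−i} = (2/2^n) Σ_{v : v_i = −1} P_v. Then there exists a coupling (G_X, G_Y) of random hypergraphs with G_X ~ P_{+i} and G_Y ~ P_{−i} such that G_X and G_Y can disagree only on hyperedges containing vertex i, and E[d_H(G_X, G_Y)] ≤ (n−1 choose r−1) · ρ/2, where d_H(G_X, G_Y) is the number of r-element subsets of [n] present in exactly one of the two hypergraphs. -/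
open MeasureTheory Finset
open scoped BigOperators ENNReal NNReal Classical

noncomputable section

/-- The ±1 vector associated with a Boolean sign pattern. -/
def signVec {n : ℕ} (s : Fin n → Bool) : Fin n → ℝ := fun j => if s j then 1 else -1

/-- The mixture pmf `P_{±i}` at a hypergraph `G`: the average of the β-model laws
`P_v` with `v = ρ·(±1)` signs, over all sign patterns with prescribed `i`-th sign. -/
def mixPMF (n r : ℕ) (ρ : ℝ) (i : Fin n) (b : Bool) (G : HG n r) : ℝ :=
  (2 / 2 ^ n) * ∑ s : Fin n → Bool, ind (s i = b) * hgWeight (fun j => ρ * signVec s j) G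

/-- Hamming distance between two hypergraphs: the number of hyperedges present in
exactly one of them. -/
def hamHG {n r : ℕ} (Gx Gy : HG n r) : ℕ :=
  (Finset.univ.filter fun e : Edge n r => Gx e ≠ Gy e).card

/-!
Pair each sign pattern `v` with `v i = +1` with the pattern `v'` obtained by setting `v i = -1`:
this is a bijection between the two halves of the mixtures, so averaging couplings of `P_v` and
`P_{v'}` gives a coupling of `P_{+i}` and `P_{-i}`. Under `P_v` and `P_{v'}` the hyperedges are
independent, with equal probabilities if they avoid `i` and logits differing by `2ρ` otherwise.
Coupling each hyperedge monotonically, it disagrees with probability `σ t - σ (t - 2ρ) ≤ ρ / 2`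
since `σ' = σ (1 - σ) ≤ 1 / 4`, and `(n - 1).choose (r - 1)` hyperedges contain `i`.
-/

lemma sigmoid_eq_real_sigmoid : sigmoid = Real.sigmoid := by
  funext t
  rw [sigmoid, Real.sigmoid_def, Real.exp_neg]
  field_simp
  ring

lemma Real.sigmoid_sub_sigmoid_le {a b : ℝ} (hab : a ≤ b) :
    Real.sigmoid b - Real.sigmoid a ≤ (b - a) / 4 := by
  have hderiv (x : ℝ) : deriv Real.sigmoid x ≤ 1 / 4 := by
    rw [Real.deriv_sigmoid]
    nlinarith [sq_nonneg (Real.sigmoid x - 1 / 2)]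
  linarith [image_sub_le_mul_sub_of_deriv_le differentiable_sigmoid hderiv hab]

section BernoulliCoupling

def bernoulliMass (p : ℝ) (b : Bool) : ℝ := if b then p else 1 - p

def monotoneCoupling (p q : ℝ) (x y : Bool) : ℝ :=
  if x then (if y then q else p - q) else (if y then 0 else 1 - p)

lemma monotoneCoupling_nonneg {p q : ℝ} (hq : 0 ≤ q) (hqp : q ≤ p) (hp : p ≤ 1) (x y : Bool) :
    0 ≤ monotoneCoupling p q x y := by
  cases x <;> cases y <;> simp only [monotoneCoupling] <;> grind

variable (p q : ℝ)

lemma sum_monotoneCoupling_right (x : Bool) :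
    ∑ y, monotoneCoupling p q x y = bernoulliMass p x := by
  cases x <;> simp [monotoneCoupling, bernoulliMass]

lemma sum_monotoneCoupling_left (y : Bool) :
    ∑ x, monotoneCoupling p q x y = bernoulliMass q y := by
  cases y <;> simp [monotoneCoupling, bernoulliMass]

lemma monotoneCoupling_self_of_ne {x y : Bool} (h : x ≠ y) : monotoneCoupling p p x y = 0 := by
  cases x <;> cases y <;> simp_all [monotoneCoupling]

lemma sum_monotoneCoupling : ∑ z : Bool × Bool, monotoneCoupling p q z.1 z.2 = 1 := by
  simp [Fintype.sum_prod_type, monotoneCoupling]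

lemma sum_monotoneCoupling_mul_ind_ne :
    ∑ z : Bool × Bool, monotoneCoupling p q z.1 z.2 * ind (z.1 ≠ z.2) = p - q := by
  simp [Fintype.sum_prod_type, monotoneCoupling, ind]

end BernoulliCoupling

section ProductSums

variable {ι κ α β : Type*} [Fintype ι] [DecidableEq ι] [Fintype κ] [Fintype α] [Fintype β]

/-- Linearity of expectation over a product measure. -/
lemma sum_prod_mul_sum_eq (f g : ι → κ → ℝ) (hf : ∀ i, ∑ k, f i k = 1) :
    ∑ x : ι → κ, (∏ i, f i (x i)) * ∑ j, g j (x j) = ∑ j, ∑ k, f j k * g j k := by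
  calc ∑ x : ι → κ, (∏ i, f i (x i)) * ∑ j, g j (x j)
      = ∑ j, ∑ x : ι → κ, ∏ i, f i (x i) * (if i = j then g i (x i) else 1) := by
        simp_rw [mul_sum, prod_mul_distrib, prod_ite_eq' univ, if_pos (mem_univ _)]
        exact sum_comm
    _ = ∑ j, ∏ i, ∑ k, f i k * (if i = j then g i k else 1) := by
        simp_rw [Fintype.prod_sum]
    _ = ∑ j, ∑ k, f j k * g j k := by
        refine sum_congr rfl fun j _ => ?_
        rw [Fintype.prod_eq_single j fun i hi => by simp [hi, hf]]
        simp

lemma sum_prod_pair_mul_sum_eq (c g : ι → α → β → ℝ)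
    (hc : ∀ i, ∑ z : α × β, c i z.1 z.2 = 1) :
    ∑ p : (ι → α) × (ι → β), (∏ i, c i (p.1 i) (p.2 i)) * ∑ j, g j (p.1 j) (p.2 j)
      = ∑ j, ∑ z : α × β, c j z.1 z.2 * g j z.1 z.2 := by
  rw [← (Equiv.arrowProdEquivProdArrow ι (fun _ => α) (fun _ => β)).sum_comp]
  exact sum_prod_mul_sum_eq (fun i (z : α × β) => c i z.1 z.2) (fun i z => g i z.1 z.2) hc

end ProductSums

section SignFlip

variable {ι : Type*} [Fintype ι] [DecidableEq ι]

lemma sum_filter_update_false {M : Type*} [AddCommMonoid M] (i : ι) (F : (ι → Bool) → M) :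
    ∑ s with s i = true, F (Function.update s i false) = ∑ s with s i = false, F s := by
  refine sum_nbij' (fun s => Function.update s i false) (fun s => Function.update s i true)
    ?_ ?_ ?_ ?_ fun _ _ => rfl
  · simp
  · simp
  · intro s hs
    simp_all
  · intro s hs
    simp_all

lemma two_mul_card_filter_apply_eq_true (i : ι) :
    2 * #{s : ι → Bool | s i = true} = 2 ^ Fintype.card ι := by
  have hhalf := sum_filter_update_false i (fun _ => 1)
  simp only [sum_const, smul_eq_mul, mul_one] at hhalf
  have htotal := card_filter_add_card_filter_not (s := (univ : Finset (ι → Bool)))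
    (fun s => s i = true)
  simp only [Bool.not_eq_true, card_univ, Fintype.card_fun, Fintype.card_bool] at htotal
  omega

end SignFlip

lemma hamHG_eq_sum_ind {n r : ℕ} (Gx Gy : HG n r) :
    (hamHG Gx Gy : ℝ) = ∑ e, ind (Gx e ≠ Gy e) := by
  rw [hamHG, card_filter, Nat.cast_sum]
  exact sum_congr rfl fun e _ => by split_ifs <;> simp [ind, *]

lemma card_filter_mem_edge_le {n r : ℕ} (i : Fin n) :
    #{e : Edge n r | i ∈ e.1} ≤ (n - 1).choose (r - 1) := by
  calc #{e : Edge n r | i ∈ e.1}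
      ≤ #((univ.erase i).powersetCard (r - 1)) := by
        refine card_le_card_of_injOn (fun e => e.1.erase i) (fun e he => ?_) fun e he f hf hef => ?_
        · simp only [coe_filter, mem_univ, true_and, Set.mem_ofPred_eq] at he
          simp [mem_powersetCard, erase_subset_erase, card_erase_of_mem he, e.2]
        · simp only [coe_filter, mem_univ, true_and, Set.mem_ofPred_eq] at he hf
          exact Subtype.ext (by rw [← insert_erase he, ← insert_erase hf]; exact congrArg _ hef)
    _ = (n - 1).choose (r - 1) := by simp

section BetaModel

variable {n r : ℕ} (ρ : ℝ) (i : Fin n) (s : Fin n → Bool)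

def edgeProb (e : Edge n r) : ℝ := sigmoid (∑ j ∈ e.1, ρ * signVec s j)

lemma hgWeight_eq_prod_bernoulliMass (G : HG n r) :
    hgWeight (fun j => ρ * signVec s j) G = ∏ e, bernoulliMass (edgeProb ρ s e) (G e) := rfl

variable {s}

lemma edgeProb_update_false (hs : s i = true) (e : Edge n r) :
    edgeProb ρ (Function.update s i false) e
      = sigmoid (∑ j ∈ e.1, ρ * signVec s j - if i ∈ e.1 then 2 * ρ else 0) := by
  have hsign (j : Fin n) :
      ρ * signVec (Function.update s i false) j = ρ * signVec s j - if i = j then 2 * ρ else 0 := by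
    rcases eq_or_ne i j with rfl | hij
    · simp [signVec, hs]; ring
    · simp [signVec, Function.update_of_ne hij.symm, hij]
  simp_rw [edgeProb, hsign, sum_sub_distrib, sum_ite_eq]

lemma edgeProb_update_false_of_not_mem (hs : s i = true) {e : Edge n r} (he : i ∉ e.1) :
    edgeProb ρ (Function.update s i false) e = edgeProb ρ s e := by
  rw [edgeProb_update_false ρ i hs, if_neg he, sub_zero, edgeProb]

variable {ρ}

lemma edgeProb_update_false_le (hρ : 0 ≤ ρ) (hs : s i = true) (e : Edge n r) :
    edgeProb ρ (Function.update s i false) e ≤ edgeProb ρ s e := by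
  rw [edgeProb_update_false ρ i hs, edgeProb, sigmoid_eq_real_sigmoid]
  exact Real.sigmoid_monotone (by split_ifs <;> linarith)

lemma edgeProb_sub_update_false_le (hρ : 0 ≤ ρ) (hs : s i = true) (e : Edge n r) :
    edgeProb ρ s e - edgeProb ρ (Function.update s i false) e ≤ if i ∈ e.1 then ρ / 2 else 0 := by
  split_ifs with he
  · rw [edgeProb_update_false ρ i hs, edgeProb, if_pos he, sigmoid_eq_real_sigmoid]
    linarith [Real.sigmoid_sub_sigmoid_le (a := ∑ j ∈ e.1, ρ * signVec s j - 2 * ρ)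
      (b := ∑ j ∈ e.1, ρ * signVec s j) (by linarith)]
  · simp [edgeProb_update_false_of_not_mem ρ i hs he]

end BetaModel

section Coupling

variable {n r : ℕ} {ρ : ℝ} {i : Fin n} {s : Fin n → Bool}

variable (ρ i s) in
def flipCoupling (p : HG n r × HG n r) : ℝ :=
  ∏ e, monotoneCoupling (edgeProb ρ s e) (edgeProb ρ (Function.update s i false) e) (p.1 e) (p.2 e)

lemma flipCoupling_nonneg (hρ : 0 ≤ ρ) (hs : s i = true) (p : HG n r × HG n r) :
    0 ≤ flipCoupling ρ i s p := by
  refine prod_nonneg fun e _ => monotoneCoupling_nonneg ?_ (edgeProb_update_false_le i hρ hs e)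
    ?_ _ _
  · rw [edgeProb, sigmoid_eq_real_sigmoid]
    exact Real.sigmoid_nonneg _
  · rw [edgeProb, sigmoid_eq_real_sigmoid]
    exact Real.sigmoid_le_one _

variable (ρ i s) in
lemma sum_flipCoupling_right (Gx : HG n r) :
    ∑ Gy, flipCoupling ρ i s (Gx, Gy) = hgWeight (fun j => ρ * signVec s j) Gx := by
  simp_rw [flipCoupling, ← Fintype.prod_sum, sum_monotoneCoupling_right]
  exact (hgWeight_eq_prod_bernoulliMass ρ s Gx).symm

variable (ρ i s) in
lemma sum_flipCoupling_left (Gy : HG n r) :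
    ∑ Gx, flipCoupling ρ i s (Gx, Gy)
      = hgWeight (fun j => ρ * signVec (Function.update s i false) j) Gy := by
  simp_rw [flipCoupling]
  rw [← Fintype.prod_sum fun e x => monotoneCoupling (edgeProb ρ s e)
    (edgeProb ρ (Function.update s i false) e) x (Gy e)]
  simp_rw [sum_monotoneCoupling_left]
  exact (hgWeight_eq_prod_bernoulliMass ρ _ Gy).symm

lemma apply_eq_of_flipCoupling_ne_zero (hs : s i = true) {p : HG n r × HG n r}
    (hp : flipCoupling ρ i s p ≠ 0) {e : Edge n r} (he : i ∉ e.1) : p.1 e = p.2 e := by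
  by_contra hne
  refine hp (prod_eq_zero (mem_univ e) ?_)
  rw [edgeProb_update_false_of_not_mem ρ i hs he]
  exact monotoneCoupling_self_of_ne _ hne

lemma sum_flipCoupling_mul_hamHG_le (hρ : 0 ≤ ρ) (hs : s i = true) :
    ∑ p : HG n r × HG n r, flipCoupling ρ i s p * hamHG p.1 p.2
      ≤ (n - 1).choose (r - 1) * (ρ / 2) := by
  calc ∑ p : HG n r × HG n r, flipCoupling ρ i s p * hamHG p.1 p.2
      = ∑ e : Edge n r, (edgeProb ρ s e - edgeProb ρ (Function.update s i false) e) := by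
        simp_rw [hamHG_eq_sum_ind, flipCoupling]
        rw [sum_prod_pair_mul_sum_eq _ (fun _ x y => ind (x ≠ y)) fun e => sum_monotoneCoupling _ _]
        simp_rw [sum_monotoneCoupling_mul_ind_ne]
    _ ≤ ∑ e : Edge n r, if i ∈ e.1 then ρ / 2 else 0 :=
        sum_le_sum fun e _ => edgeProb_sub_update_false_le i hρ hs e
    _ = #{e : Edge n r | i ∈ e.1} * (ρ / 2) := by
        rw [sum_ite, sum_const, sum_const_zero, add_zero, nsmul_eq_mul]
    _ ≤ (n - 1).choose (r - 1) * (ρ / 2) := by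
        gcongr
        exact_mod_cast card_filter_mem_edge_le i

variable (n r ρ i) in
def mixCoupling (p : HG n r × HG n r) : ℝ :=
  (2 / 2 ^ n) * ∑ s with s i = true, flipCoupling ρ i s p

lemma mixPMF_eq_sum_filter (b : Bool) (G : HG n r) :
    mixPMF n r ρ i b G = (2 / 2 ^ n) * ∑ s with s i = b, hgWeight (fun j => ρ * signVec s j) G := by
  rw [mixPMF, sum_filter]
  congr 1
  exact sum_congr rfl fun s _ => by split_ifs <;> simp [ind, *]

lemma mixCoupling_nonneg (hρ : 0 ≤ ρ) (p : HG n r × HG n r) : 0 ≤ mixCoupling n r ρ i p :=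
  mul_nonneg (by positivity) (sum_nonneg fun s hs => flipCoupling_nonneg hρ (mem_filter.1 hs).2 p)

lemma sum_mixCoupling_right (Gx : HG n r) :
    ∑ Gy, mixCoupling n r ρ i (Gx, Gy) = mixPMF n r ρ i true Gx := by
  simp_rw [mixCoupling, ← mul_sum, mixPMF_eq_sum_filter]
  rw [sum_comm]
  simp_rw [sum_flipCoupling_right]

lemma sum_mixCoupling_left (Gy : HG n r) :
    ∑ Gx, mixCoupling n r ρ i (Gx, Gy) = mixPMF n r ρ i false Gy := by
  simp_rw [mixCoupling, ← mul_sum, mixPMF_eq_sum_filter]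
  rw [sum_comm]
  simp_rw [sum_flipCoupling_left]
  rw [sum_filter_update_false i fun s => hgWeight (fun j => ρ * signVec s j) Gy]

lemma apply_eq_of_mixCoupling_ne_zero {p : HG n r × HG n r} (hp : mixCoupling n r ρ i p ≠ 0)
    {e : Edge n r} (he : i ∉ e.1) : p.1 e = p.2 e := by
  obtain ⟨s, hs, hsp⟩ := exists_ne_zero_of_sum_ne_zero (right_ne_zero_of_mul hp)
  exact apply_eq_of_flipCoupling_ne_zero (mem_filter.1 hs).2 hsp he

lemma sum_mixCoupling_mul_hamHG_le (hρ : 0 ≤ ρ) :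
    ∑ p : HG n r × HG n r, mixCoupling n r ρ i p * hamHG p.1 p.2
      ≤ (n - 1).choose (r - 1) * ρ / 2 := by
  have hcard : (2 / 2 ^ n : ℝ) * #{s : Fin n → Bool | s i = true} = 1 := by
    have h := two_mul_card_filter_apply_eq_true i
    rw [Fintype.card_fin] at h
    field_simp
    exact_mod_cast h
  calc ∑ p : HG n r × HG n r, mixCoupling n r ρ i p * hamHG p.1 p.2
      = (2 / 2 ^ n) * ∑ s with s i = true,
          ∑ p : HG n r × HG n r, flipCoupling ρ i s p * hamHG p.1 p.2 := by
        simp_rw [mixCoupling, mul_assoc, ← mul_sum, sum_mul]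
        rw [sum_comm]
    _ ≤ (2 / 2 ^ n) *
          ∑ s : Fin n → Bool with s i = true, ((n - 1).choose (r - 1) * (ρ / 2) : ℝ) := by
        gcongr with s hs
        exact sum_flipCoupling_mul_hamHG_le hρ (mem_filter.1 hs).2
    _ = (n - 1).choose (r - 1) * ρ / 2 := by
        rw [sum_const, nsmul_eq_mul, ← mul_assoc, hcard]
        ring

end Coupling

theorem stmt18_general (n r : ℕ) (i : Fin n) (ρ : ℝ) (hρ0 : 0 < ρ) :
    ∃ w : HG n r × HG n r → ℝ,
      (∀ p, 0 ≤ w p) ∧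
      (∀ Gx : HG n r, ∑ Gy : HG n r, w (Gx, Gy) = mixPMF n r ρ i true Gx) ∧
      (∀ Gy : HG n r, ∑ Gx : HG n r, w (Gx, Gy) = mixPMF n r ρ i false Gy) ∧
      (∀ p : HG n r × HG n r, w p ≠ 0 → ∀ e : Edge n r, i ∉ e.1 → p.1 e = p.2 e) ∧
      (∑ p : HG n r × HG n r, w p * (hamHG p.1 p.2 : ℝ) ≤
        ((n - 1).choose (r - 1) : ℝ) * ρ / 2) :=
  ⟨mixCoupling n r ρ i, mixCoupling_nonneg hρ0.le, sum_mixCoupling_right, sum_mixCoupling_left,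
    fun _ hp _ he => apply_eq_of_mixCoupling_ne_zero hp he, sum_mixCoupling_mul_hamHG_le hρ0.le⟩

/-- There is a coupling of `P_{+i}` and `P_{−i}` that only disagrees on
hyperedges containing `i` and whose expected Hamming distance is at most
`(n−1 choose r−1)·ρ/2`. -/
theorem stmt18 (n r : ℕ) (hr : 2 ≤ r) (hn : r ≤ n) (M : ℝ) (hM : 0 < M)
    (i : Fin n) (ρ : ℝ) (hρ0 : 0 < ρ) (hρM : ρ ≤ M) :
    ∃ w : HG n r × HG n r → ℝ,
      (∀ p, 0 ≤ w p) ∧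
      (∀ Gx : HG n r, ∑ Gy : HG n r, w (Gx, Gy) = mixPMF n r ρ i true Gx) ∧
      (∀ Gy : HG n r, ∑ Gx : HG n r, w (Gx, Gy) = mixPMF n r ρ i false Gy) ∧
      (∀ p : HG n r × HG n r, w p ≠ 0 → ∀ e : Edge n r, i ∉ e.1 → p.1 e = p.2 e) ∧
      (∑ p : HG n r × HG n r, w p * (hamHG p.1 p.2 : ℝ) ≤
        ((n - 1).choose (r - 1) : ℝ) * ρ / 2) :=
  stmt18_general n r i ρ hρ0
end
end
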